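/- arXiv:2311.05654 — 2 statements merged into one kernel-verified Lean document; each statement's English description precedes it below -/
import Mathlib

section
/- Existence and uniqueness of the inverse system of formal power series: Let f₁, …, fₙ be multivariate formal power series in n variables over a commutative ring. Then there exist unique formal power series g₁, …, gₙ, each with zero constant term, satisfying gᵢ = xᵢ · fᵢ(g₁, …, gₙ) for all i = 1, …, n. -/
open MvPowerSeries

/-- Substitution of a family of multivariate formal power series `g` (intended to have zero
constant term) into a multivariate formal power series `f`.  The coefficient of a monomial `d`
in `f(g₁, …, gₙ)` is the (finite, when every `gᵢ` has zero constant term) sum over all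
multi-indices `e` of `(coeff e f) * coeff d (g₁^{e₁} ⋯ gₙ^{eₙ})`. -/
noncomputable def MvPowerSeries.substFun {n : ℕ} {R : Type*} [CommRing R]
    (f : MvPowerSeries (Fin n) R) (g : Fin n → MvPowerSeries (Fin n) R) :
    MvPowerSeries (Fin n) R :=
  fun d => ∑ᶠ e : Fin n →₀ ℕ, coeff e f * coeff d (∏ i : Fin n, g i ^ e i)

/-!
The map `Φ g = (Xᵢ · fᵢ(g))ᵢ` is contracting for the total-degree filtration: if `g` and `h`
agree in degrees `< m`, then `Φ g` and `Φ h` agree in degrees `≤ m`. Indeed substitution preserves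
agreement below a degree (the coefficient of `xᵈ` in `∏ gⱼ ^ eⱼ` only involves coefficients of
degree `≤ |d|` of the `gⱼ`), and multiplication by `Xᵢ` raises the degree by one. Hence the
iterates `Φ^[k] 0` stabilise degree by degree to a fixed point, and two fixed points agree in
every degree by induction. Fixed points have zero constant term because of the factor `Xᵢ`.
-/

open Function

theorem Ideal.prod_pow_sub_prod_pow_mem {ι R : Type*} [Fintype ι] [CommRing R] {I : Ideal R}
    {a b : ι → R} (hab : ∀ i, a i - b i ∈ I) (e : ι → ℕ) :
    ∏ i, a i ^ e i - ∏ i, b i ^ e i ∈ I := by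
  rw [← Ideal.Quotient.eq]
  simp only [map_prod, map_pow, Ideal.Quotient.eq.mpr (hab _)]

namespace MvPowerSeries

variable {σ R : Type*} [CommRing R]

variable (σ R) in
def orderIdeal (m : ℕ) : Ideal (MvPowerSeries σ R) where
  carrier := {F | (m : ℕ∞) ≤ F.order}
  zero_mem' := by simp
  add_mem' ha hb := (le_min ha hb).trans min_order_le_add
  smul_mem' c _ hF := (hF.trans le_add_self).trans le_order_mul

theorem mem_orderIdeal_iff {m : ℕ} {F : MvPowerSeries σ R} :
    F ∈ orderIdeal σ R m ↔ ∀ d : σ →₀ ℕ, d.degree < m → coeff d F = 0 :=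
  ⟨fun hF _ hd => coeff_of_lt_order ((Nat.cast_lt.mpr hd).trans_le hF), nat_le_order⟩

theorem orderIdeal_zero : orderIdeal σ R 0 = ⊤ :=
  Ideal.eq_top_iff_one _ |>.mpr (by simp [orderIdeal])

theorem orderIdeal_antitone : Antitone (orderIdeal σ R) :=
  fun _ _ hmk F (hF : _ ≤ F.order) => (Nat.cast_le.mpr hmk).trans hF

theorem X_mul_mem_orderIdeal_succ {m : ℕ} {F : MvPowerSeries σ R} (hF : F ∈ orderIdeal σ R m)
    (i : σ) : X i * F ∈ orderIdeal σ R (m + 1) := by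
  have hX : 1 ≤ (X i : MvPowerSeries σ R).order :=
    one_le_order_iff_constCoeff_eq_zero.mpr (constantCoeff_X i)
  calc ((m + 1 : ℕ) : ℕ∞) = 1 + m := by push_cast; ring
    _ ≤ (X i).order + F.order := add_le_add hX hF
    _ ≤ (X i * F).order := le_order_mul

theorem eq_of_forall_sub_mem_orderIdeal {F G : MvPowerSeries σ R}
    (h : ∀ m, F - G ∈ orderIdeal σ R m) : F = G := by
  ext d
  rw [← sub_eq_zero, ← map_sub]
  exact mem_orderIdeal_iff.mp (h (d.degree + 1)) d (Nat.lt_succ_self _)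

theorem exists_forall_sub_mem_orderIdeal {s : ℕ → MvPowerSeries σ R}
    (hs : ∀ k, s k - s (k + 1) ∈ orderIdeal σ R k) :
    ∃ F, ∀ k, F - s k ∈ orderIdeal σ R k := by
  have hcauchy : ∀ k j, k ≤ j → s k - s j ∈ orderIdeal σ R k := by
    intro k j hkj
    induction j, hkj using Nat.le_induction with
    | base => simp
    | succ j hkj ih =>
      rw [← sub_add_sub_cancel _ (s j)]
      exact add_mem ih (orderIdeal_antitone hkj (hs j))
  refine ⟨(fun d => coeff d (s (d.degree + 1)) : MvPowerSeries σ R),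
    fun k => mem_orderIdeal_iff.mpr fun d hd => ?_⟩
  change coeff d (s (d.degree + 1)) - coeff d (s k) = 0
  rw [← map_sub]
  exact mem_orderIdeal_iff.mp (hcauchy _ k hd) d (Nat.lt_succ_self _)

variable {ι : Type*}

def IsOrderContracting (Φ : (ι → MvPowerSeries σ R) → ι → MvPowerSeries σ R) : Prop :=
  ∀ m g h, (∀ i, g i - h i ∈ orderIdeal σ R m) → ∀ i, Φ g i - Φ h i ∈ orderIdeal σ R (m + 1)

theorem IsOrderContracting.existsUnique_isFixedPt
    {Φ : (ι → MvPowerSeries σ R) → ι → MvPowerSeries σ R} (hΦ : IsOrderContracting Φ) :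
    ∃! g, IsFixedPt Φ g := by
  have hclose : ∀ {g h}, IsFixedPt Φ g → IsFixedPt Φ h → ∀ m i, g i - h i ∈ orderIdeal σ R m := by
    intro g h hg hh m
    induction m with
    | zero => simp [orderIdeal_zero]
    | succ m ih => rw [← hg, ← hh]; exact hΦ m g h ih
  set s : ℕ → ι → MvPowerSeries σ R := fun k => Φ^[k] 0
  have hs_succ : ∀ k, s (k + 1) = Φ (s k) := fun k => iterate_succ_apply' Φ k 0
  have hs : ∀ k i, s k i - s (k + 1) i ∈ orderIdeal σ R k := by
    intro k
    induction k with
    | zero => simp [orderIdeal_zero]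
    | succ k ih =>
      have := hΦ k _ _ ih
      rwa [← hs_succ, ← hs_succ] at this
  choose g hg using fun i => exists_forall_sub_mem_orderIdeal (hs · i)
  have hfix : IsFixedPt Φ g := funext fun i => eq_of_forall_sub_mem_orderIdeal fun m => by
    rw [← sub_add_sub_cancel _ (s (m + 1) i), ← neg_sub (g i)]
    exact add_mem (orderIdeal_antitone m.le_succ (hs_succ m ▸ hΦ m g (s m) (hg · m) i))
      (neg_mem (orderIdeal_antitone m.le_succ (hg i (m + 1))))
  exact ⟨g, hfix, fun h hh => funext fun i =>
    eq_of_forall_sub_mem_orderIdeal fun m => hclose hh hfix m i⟩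

theorem substFun_sub_substFun_mem_orderIdeal {n : ℕ} (f : MvPowerSeries (Fin n) R)
    {g h : Fin n → MvPowerSeries (Fin n) R} {m : ℕ}
    (hgh : ∀ i, g i - h i ∈ orderIdeal (Fin n) R m) :
    f.substFun g - f.substFun h ∈ orderIdeal (Fin n) R m := by
  refine mem_orderIdeal_iff.mpr fun d hd => ?_
  have hprod (e : Fin n →₀ ℕ) : coeff d (∏ i, g i ^ e i) = coeff d (∏ i, h i ^ e i) := by
    rw [← sub_eq_zero, ← map_sub]
    exact mem_orderIdeal_iff.mp (Ideal.prod_pow_sub_prod_pow_mem hgh e) d hd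
  rw [map_sub, sub_eq_zero]
  exact finsum_congr fun e => by rw [hprod e]

theorem isOrderContracting_X_mul_substFun {n : ℕ} (f : Fin n → MvPowerSeries (Fin n) R) :
    IsOrderContracting fun g i => X i * (f i).substFun g := fun _ _ _ hgh i => by
  simpa only [← mul_sub] using
    X_mul_mem_orderIdeal_succ (substFun_sub_substFun_mem_orderIdeal (f i) hgh) i

end MvPowerSeries

/-- Existence and uniqueness of the inverse system of formal power series:
given multivariate formal power series `f₁, …, fₙ` in `n` variables over a commutative ring,
there exist unique formal power series `g₁, …, gₙ`, each with zero constant term, satisfying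
`gᵢ = xᵢ · fᵢ(g₁, …, gₙ)` for all `i`. -/
theorem lagrange_good_exists_unique {n : ℕ} {R : Type*} [CommRing R]
    (f : Fin n → MvPowerSeries (Fin n) R) :
    ∃! g : Fin n → MvPowerSeries (Fin n) R,
      (∀ i, constantCoeff (g i) = 0) ∧
      (∀ i, g i = X i * (f i).substFun g) := by
  obtain ⟨g, hg, huniq⟩ := (isOrderContracting_X_mul_substFun f).existsUnique_isFixedPt
  have hg_eq (i : Fin n) : g i = X i * (f i).substFun g := (congrFun hg i).symm
  exact ⟨g, ⟨fun i => by simp [hg_eq i], hg_eq⟩,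
    fun h ⟨_, hh⟩ => huniq h (funext fun i => (hh i).symm)⟩
end

section
/- Classical (single-variable) Lagrange inversion as the case n = 1: Let f be a formal power series in one variable over a commutative ℚ-algebra with nonzero constant term, and let g be the unique formal power series with zero constant term satisfying g = x · f(g). Then for every formal power series φ and every natural number k, the coefficient of x^k in φ(g) / (1 − x · f'(g)) equals the coefficient of x^k in φ(x) · f(x)^k. -/
/-!
Write `g = X * u` with `u = f(g)`. The chain rule gives `g' * (1 - X * f'(g)) = u`, so the
left-hand side is the coefficient of `x^k` in `φ(g) * g' / u = F(g) * g' / u^(k+1)` with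
`F = φ * f^k`. Over a field of characteristic zero, `[x^k] F(g) * g' / u^(k+1) = [x^k] F` is the
change of variables `t = g(x)` in a residue: it reduces to `[x^n] g' / u^(n+1) = 0` for `n > 0`,
which holds because `g' / g^(n+1)` is the derivative of `-g^(-n) / n`.

The general case is a specialisation of the universal one, where `f` and `φ` have
indeterminate coefficients over `ℤ` and the constant term of `f` becomes invertible in the
fraction field. The fixed point `g` exists and is unique over any ring because `g ↦ X * f(g)` is
a contraction for the `X`-adic filtration.
-/

open PowerSeries

/-- Substitution of a formal power series `g` (intended to have zero constant term) into a
formal power series `f`.  The coefficient of `x^d` in `f(g)` is the (finite, when `g` has zero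
constant term) sum over all `e` of `(coeff e f) * coeff d (g^e)`. -/
noncomputable def PowerSeries.substFun {R : Type*} [CommRing R] (f g : PowerSeries R) :
    PowerSeries R :=
  PowerSeries.mk fun d => ∑ᶠ e : ℕ, coeff e f * coeff d (g ^ e)

namespace PowerSeries

section CommRing

variable {R S : Type*} [CommRing R] [CommRing S]

theorem substFun_eq_subst {g : R⟦X⟧} (hg : constantCoeff g = 0) (f : R⟦X⟧) :
    f.substFun g = f.subst g := by
  ext d
  simp [substFun, coeff_subst' (HasSubst.of_constantCoeff_zero' hg)]

theorem constantCoeff_subst_of_constantCoeff_zero {g : R⟦X⟧} (hg : constantCoeff g = 0)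
    (f : R⟦X⟧) : constantCoeff (f.subst g) = constantCoeff f := by
  rw [← coeff_zero_eq_constantCoeff_apply, coeff_subst' (HasSubst.of_constantCoeff_zero' hg),
    finsum_eq_single _ 0]
  · simp
  · intro e he
    simp [coeff_zero_eq_constantCoeff_apply, hg, he]

theorem X_pow_dvd_subst_sub_subst {a b : R⟦X⟧} (ha : HasSubst a) (hb : HasSubst b) {n : ℕ}
    (hab : X ^ n ∣ a - b) (f : R⟦X⟧) : X ^ n ∣ f.subst a - f.subst b := by
  rw [X_pow_dvd_iff] at hab ⊢
  intro d hd
  have hpow (e : ℕ) : coeff d (a ^ e) = coeff d (b ^ e) := by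
    rw [← sub_eq_zero, ← map_sub]
    exact X_pow_dvd_iff.mp ((X_pow_dvd_iff.mpr hab).trans (sub_dvd_pow_sub_pow a b e)) d hd
  rw [map_sub, coeff_subst' ha, coeff_subst' hb, sub_eq_zero]
  simp only [hpow]

theorem eq_of_forall_X_pow_dvd_sub {a b : R⟦X⟧} (h : ∀ n, X ^ n ∣ a - b) : a = b := by
  ext d
  rw [← sub_eq_zero, ← map_sub]
  exact X_pow_dvd_iff.mp (h (d + 1)) d d.lt_succ_self

theorem existsUnique_fixedPoint_of_X_pow_dvd {T : R⟦X⟧ → R⟦X⟧}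
    (hT : ∀ n a b, X ^ n ∣ a - b → X ^ (n + 1) ∣ T a - T b) : ∃! h, T h = h := by
  set x : ℕ → R⟦X⟧ := fun n => T^[n] 0
  have hstep (n : ℕ) : X ^ n ∣ x (n + 1) - x n := by
    induction n with
    | zero => simp
    | succ n ih =>
      simp only [x, Function.iterate_succ_apply'] at ih ⊢
      exact hT n _ _ ih
  have hcauchy (n m : ℕ) (hnm : n ≤ m) : X ^ n ∣ x m - x n := by
    induction m, hnm using Nat.le_induction with
    | base => simp
    | succ m hnm ih =>
      rw [← sub_add_sub_cancel]
      exact dvd_add ((pow_dvd_pow X hnm).trans (hstep m)) ih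
  set h := mk fun d => coeff d (x (d + 1))
  have hlim (n : ℕ) : X ^ n ∣ h - x n := by
    rw [X_pow_dvd_iff]
    intro d hd
    rw [map_sub, coeff_mk, sub_eq_zero, ← sub_eq_zero, ← map_sub]
    exact X_pow_dvd_iff.mp (dvd_sub_comm.mp (hcauchy (d + 1) n hd)) d d.lt_succ_self
  have hfix : T h = h := by
    refine eq_of_forall_X_pow_dvd_sub fun n => ?_
    cases n with
    | zero => simp
    | succ n =>
      rw [← sub_add_sub_cancel _ (x (n + 1))]
      refine dvd_add ?_ (dvd_sub_comm.mp (hlim (n + 1)))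
      simp only [x, Function.iterate_succ_apply']
      exact hT n _ _ (hlim n)
  refine ⟨h, hfix, fun a ha => eq_of_forall_X_pow_dvd_sub fun n => ?_⟩
  induction n with
  | zero => simp
  | succ n ih =>
    rw [← ha, ← hfix]
    exact hT n _ _ ih

theorem existsUnique_eq_X_mul_subst (f : R⟦X⟧) : ∃! g : R⟦X⟧, g = X * f.subst g := by
  -- iterate on `h = g / X`, so that every argument of `subst` is substitutable
  have hX (a : R⟦X⟧) : HasSubst (X * a) := HasSubst.of_constantCoeff_zero' (by simp)
  obtain ⟨h, hh, huniq⟩ := existsUnique_fixedPoint_of_X_pow_dvd (T := fun a => f.subst (X * a))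
    fun n a b hab => X_pow_dvd_subst_sub_subst (hX a) (hX b)
      (by rw [pow_succ', ← mul_sub]; exact mul_dvd_mul_left X hab) f
  refine ⟨X * h, by simp only [hh], fun g (hg : g = X * f.subst g) => ?_⟩
  rw [hg, huniq (f.subst g) (by simp only [← hg])]

theorem map_derivative (ρ : R →+* S) (f : R⟦X⟧) :
    map ρ (d⁄dX R f) = d⁄dX S (map ρ f) := by
  ext d
  simp [coeff_derivative]

theorem map_invOfUnit (ρ : R →+* S) {φ : R⟦X⟧} {u : Rˣ} (h : constantCoeff φ = u) :
    map ρ (invOfUnit φ u) = invOfUnit (map ρ φ) (Units.map ρ u) := by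
  refine left_inv_eq_right_inv (a := map ρ φ) ?_ (mul_invOfUnit _ _ ?_)
  · rw [← map_mul, invOfUnit_mul φ u h, map_one]
  · rw [← coeff_zero_eq_constantCoeff_apply, coeff_map, coeff_zero_eq_constantCoeff_apply, h]
    rfl

theorem map_subst_mul_invOfUnit (ρ : R →+* S) {f g : R⟦X⟧} (hg : HasSubst g) (φ : R⟦X⟧) :
    map ρ (φ.subst g * invOfUnit (1 - X * (d⁄dX R f).subst g) 1) =
      (map ρ φ).subst (map ρ g) *
        invOfUnit (1 - X * (d⁄dX S (map ρ f)).subst (map ρ g)) 1 := by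
  have hsubst (ψ : R⟦X⟧) : map ρ (ψ.subst g) = (map ρ ψ).subst (map ρ g) := map_subst hg ψ
  rw [map_mul, hsubst, map_invOfUnit ρ (by simp), map_sub, map_one, map_mul, map_X, hsubst,
    map_derivative, map_one]

end CommRing

section Field

variable {K : Type*} [Field K] [CharZero K]

theorem coeff_derivative_X_mul_mul_inv_pow {u : K⟦X⟧} (hu : constantCoeff u ≠ 0) (n : ℕ) :
    coeff n (d⁄dX K (X * u) * u⁻¹ ^ (n + 1)) = if n = 0 then 1 else 0 := by
  have huv : u * u⁻¹ = 1 := PowerSeries.mul_inv_cancel u hu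
  have hexpand : d⁄dX K (X * u) * u⁻¹ ^ (n + 1) =
      u⁻¹ ^ n + X * (u⁻¹ ^ (n + 1) * d⁄dX K u) := by
    rw [Derivation.leibniz, derivative_X, smul_eq_mul, smul_eq_mul]
    linear_combination u⁻¹ ^ n * huv
  rcases n with _ | s
  · rw [hexpand]
    simp
  · have hD : d⁄dX K (u⁻¹ ^ (s + 1)) = C (-(s + 1 : K)) * (u⁻¹ ^ (s + 2) * d⁄dX K u) := by
      rw [derivative_pow, derivative_inv', map_neg, map_add, map_natCast, map_one]
      push_cast
      ring
    have hcoeff := coeff_derivative (u⁻¹ ^ (s + 1)) s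
    rw [hD, coeff_C_mul] at hcoeff
    rw [hexpand, map_add, coeff_succ_X_mul, if_neg s.succ_ne_zero]
    have hs : (s + 1 : K) ≠ 0 := s.cast_add_one_ne_zero
    apply mul_left_cancel₀ hs
    linear_combination -hcoeff

theorem coeff_subst_mul_derivative_mul_inv_pow {g u : K⟦X⟧} (hgu : g = X * u)
    (hu : constantCoeff u ≠ 0) (F : K⟦X⟧) (k : ℕ) :
    coeff k (F.subst g * (d⁄dX K g * u⁻¹ ^ (k + 1))) = coeff k F := by
  subst hgu
  have hg : HasSubst (X * u) := HasSubst.of_constantCoeff_zero' (by simp)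
  set H := d⁄dX K (X * u) * u⁻¹ ^ (k + 1)
  have hhigh (P : K⟦X⟧) : coeff k ((X ^ (k + 1) * P).subst (X * u) * H) = 0 := by
    rw [subst_mul hg, subst_pow hg, subst_X hg, mul_pow, mul_assoc, mul_assoc,
      coeff_X_pow_mul', if_neg (by omega)]
  have hlow : ((trunc (k + 1) F : K⟦X⟧)).subst (X * u) =
      ∑ i ∈ Finset.range (k + 1), coeff i F • (X * u) ^ i := by
    rw [subst_coe hg, Polynomial.aeval_eq_sum_range' (natDegree_trunc_lt F k)]
    refine Finset.sum_congr rfl fun i hi => ?_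
    rw [coeff_trunc, if_pos (Finset.mem_range.mp hi)]
  have hterm (i : ℕ) (hi : i ≤ k) : coeff k ((X * u) ^ i * H) = if i = k then 1 else 0 := by
    have hu' : u ^ i * u⁻¹ ^ (k + 1) = u⁻¹ ^ (k - i + 1) := by
      rw [show k + 1 = i + (k - i + 1) by omega, pow_add, ← mul_assoc, ← mul_pow,
        PowerSeries.mul_inv_cancel u hu, one_pow, one_mul]
    rw [mul_pow, show X ^ i * u ^ i * H = X ^ i * (d⁄dX K (X * u) * u⁻¹ ^ (k - i + 1)) by
      rw [← hu']; ring, coeff_X_pow_mul', if_pos hi, coeff_derivative_X_mul_mul_inv_pow hu]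
    simp only [Nat.sub_eq_zero_iff_le, hi.ge_iff_eq]
  conv_lhs => rw [eq_X_pow_mul_shift_add_trunc (k + 1) F]
  rw [subst_add hg, add_mul, map_add, hhigh, zero_add, hlow, Finset.sum_mul, map_sum,
    Finset.sum_eq_single_of_mem k (Finset.self_mem_range_succ k)]
  · rw [smul_mul_assoc, coeff_smul, hterm k le_rfl, if_pos rfl, smul_eq_mul, mul_one]
  · intro i hi hik
    rw [smul_mul_assoc, coeff_smul, hterm i (Finset.mem_range_succ_iff.mp hi), if_neg hik,
      smul_zero]

theorem coeff_subst_mul_invOfUnit_of_field {f g : K⟦X⟧} (hf : constantCoeff f ≠ 0)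
    (hg : g = X * f.subst g) (φ : K⟦X⟧) (k : ℕ) :
    coeff k (φ.subst g * invOfUnit (1 - X * (d⁄dX K f).subst g) 1) = coeff k (φ * f ^ k) := by
  have hg0 : constantCoeff g = 0 := by rw [hg]; simp
  have hgs : HasSubst g := HasSubst.of_constantCoeff_zero' hg0
  set u : K⟦X⟧ := f.subst g
  have hu : constantCoeff u ≠ 0 := by rwa [constantCoeff_subst_of_constantCoeff_zero hg0]
  have huv : u * u⁻¹ = 1 := PowerSeries.mul_inv_cancel u hu
  set A := 1 - X * (d⁄dX K f).subst g
  have hg' : d⁄dX K g = u + X * ((d⁄dX K f).subst g * d⁄dX K g) := by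
    conv_lhs => rw [hg]
    rw [Derivation.leibniz, derivative_subst hgs, derivative_X, smul_eq_mul, smul_eq_mul]
    ring
  have hA : A * (d⁄dX K g * u⁻¹) = 1 := by
    linear_combination u⁻¹ * hg' + huv
  have hW : invOfUnit A 1 = d⁄dX K g * u⁻¹ :=
    left_inv_eq_right_inv (a := A) (invOfUnit_mul A 1 (by simp [A])) hA
  have hφ : φ.subst g * (d⁄dX K g * u⁻¹) =
      (φ * f ^ k).subst g * (d⁄dX K g * u⁻¹ ^ (k + 1)) := by
    have hk : u ^ k * u⁻¹ ^ k = 1 := by rw [← mul_pow, huv, one_pow]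
    rw [subst_mul hgs, subst_pow hgs]
    linear_combination (-(φ.subst g * d⁄dX K g * u⁻¹)) * hk
  rw [hW, hφ, coeff_subst_mul_derivative_mul_inv_pow hg hu]

end Field

theorem coeff_subst_mul_invOfUnit_of_isDomain {A : Type*} [CommRing A] [IsDomain A] [CharZero A]
    {f g : A⟦X⟧} (hf : constantCoeff f ≠ 0) (hg : g = X * f.subst g) (φ : A⟦X⟧) (k : ℕ) :
    coeff k (φ.subst g * invOfUnit (1 - X * (d⁄dX A f).subst g) 1) = coeff k (φ * f ^ k) := by
  set ι := algebraMap A (FractionRing A)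
  have hι : Function.Injective ι := IsFractionRing.injective A (FractionRing A)
  have hgs : HasSubst g := HasSubst.of_constantCoeff_zero' (by rw [hg]; simp)
  apply hι
  rw [← coeff_map, ← coeff_map, map_subst_mul_invOfUnit ι hgs, map_mul (map ι), map_pow]
  refine coeff_subst_mul_invOfUnit_of_field ?_ ?_ _ k
  · rwa [← coeff_zero_eq_constantCoeff_apply, coeff_map, coeff_zero_eq_constantCoeff_apply,
      map_ne_zero_iff ι hι]
  · conv_lhs => rw [hg]
    rw [map_mul, map_X]
    exact congrArg (X * ·) (map_subst hgs f)

theorem coeff_subst_mul_invOfUnit {R : Type*} [CommRing R] {f g : R⟦X⟧}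
    (hg : g = X * f.subst g) (φ : R⟦X⟧) (k : ℕ) :
    coeff k (φ.subst g * invOfUnit (1 - X * (d⁄dX R f).subst g) 1) = coeff k (φ * f ^ k) := by
  let F : (MvPolynomial (ℕ ⊕ ℕ) ℤ)⟦X⟧ := mk fun i => MvPolynomial.X (Sum.inl i)
  let Φ : (MvPolynomial (ℕ ⊕ ℕ) ℤ)⟦X⟧ := mk fun i => MvPolynomial.X (Sum.inr i)
  obtain ⟨G, hG, -⟩ := existsUnique_eq_X_mul_subst F
  have hGs : HasSubst G := HasSubst.of_constantCoeff_zero' (by rw [hG]; simp)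
  let ρ := MvPolynomial.eval₂Hom (Int.castRingHom R) (Sum.elim (coeff · f) (coeff · φ))
  have hF : map ρ F = f := by ext i; simp [F, ρ]
  have hΦ : map ρ Φ = φ := by ext i; simp [Φ, ρ]
  have hρG : map ρ G = g := by
    refine (existsUnique_eq_X_mul_subst f).unique ?_ hg
    conv_lhs => rw [hG]
    rw [map_mul, map_X, ← hF]
    exact congrArg (X * ·) (map_subst hGs F)
  have hF0 : constantCoeff F ≠ 0 := by simp [F, MvPolynomial.X_ne_zero]
  rw [← hF, ← hΦ, ← hρG, ← map_subst_mul_invOfUnit ρ hGs, coeff_map,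
    coeff_subst_mul_invOfUnit_of_isDomain hF0 hG, ← coeff_map, map_mul, map_pow]

end PowerSeries

theorem lagrange_inversion_general {R : Type*} [CommRing R]
    (f : PowerSeries R)
    (g : PowerSeries R)
    (hg : g = X * f.substFun g)
    (φ : PowerSeries R) (k : ℕ) :
    coeff k
        (φ.substFun g *
          PowerSeries.invOfUnit (1 - X * (d⁄dX R f).substFun g) 1) =
      coeff k (φ * f ^ k) := by
  have hg0 : constantCoeff g = 0 := by rw [hg]; simp
  simp only [substFun_eq_subst hg0] at hg ⊢
  exact coeff_subst_mul_invOfUnit hg φ k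

/-- **Classical (single-variable) Lagrange inversion.**  Let `f` be a formal power series over a
commutative `ℚ`-algebra with nonzero constant term, and let `g` be the unique formal power series
with zero constant term satisfying `g = x · f(g)`.  Then for every formal power series `φ` and
every `k : ℕ`, the coefficient of `x^k` in `φ(g) / (1 − x · f'(g))` equals the coefficient of
`x^k` in `φ(x) · f(x)^k`.  (The series `1 − x · f'(g)` has constant term `1`, so its inverse is
given by `invOfUnit _ 1`.) -/
theorem lagrange_inversion {R : Type*} [CommRing R] [Algebra ℚ R]
    (f : PowerSeries R) (hf : constantCoeff f ≠ 0)
    (g : PowerSeries R) (hg0 : constantCoeff g = 0)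
    (hg : g = X * f.substFun g)
    (φ : PowerSeries R) (k : ℕ) :
    coeff k
        (φ.substFun g *
          PowerSeries.invOfUnit (1 - X * (d⁄dX R f).substFun g) 1) =
      coeff k (φ * f ^ k) :=
  lagrange_inversion_general f g hg φ k
end
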